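/- arXiv:2210.16138 — 2 statements merged into one kernel-verified Lean document; each statement's English description precedes it below -/
import Mathlib

section
/- Let Y = Z^r with standard basis e_1,...,e_r, and let B: Y × Y → Z be the symmetric bilinear form with B(e_i,e_i) = 2p and B(e_i,e_j) = q for i ≠ j, where p, q ∈ Z. If n divides q, then the sublattice Y_{Q,n} = {y ∈ Y : B(y,z) ∈ nZ for all z ∈ Y} equals n_α·Y, where n_α = n/gcd(2p, n). -/
/-!
Modulo `n` the off-diagonal entries `q` vanish, so `n ∣ B(y, z)` for all `z` says
`n ∣ 2p · y_i` for every `i` (test against the basis vectors), and cancelling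
`gcd(2p, n)` turns this into `n / gcd(2p, n) ∣ y_i`.
-/

theorem Int.dvd_mul_iff_ediv_gcd_dvd {a b y : ℤ} (hb : b ≠ 0) :
    b ∣ a * y ↔ b / a.gcd b ∣ y := by
  have hg : 0 < a.gcd b := Int.gcd_pos_of_ne_zero_right a hb
  have hcop : IsCoprime (b / a.gcd b) (a / a.gcd b) :=
    (Int.isCoprime_iff_gcd_eq_one.mpr (Int.gcd_div_gcd_div_gcd hg)).symm
  calc b ∣ a * y ↔ a.gcd b * (b / a.gcd b) ∣ a.gcd b * (a / a.gcd b * y) := by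
        rw [Int.mul_ediv_cancel' (Int.gcd_dvd_right a b), ← mul_assoc,
          Int.mul_ediv_cancel' (Int.gcd_dvd_left a b)]
    _ ↔ b / a.gcd b ∣ a / a.gcd b * y := mul_dvd_mul_iff_left (by exact_mod_cast hg.ne')
    _ ↔ b / a.gcd b ∣ y := ⟨hcop.dvd_of_dvd_mul_left, fun h => h.mul_left _⟩

section BilinearForm

variable {ι R : Type*} [Fintype ι] [DecidableEq ι] [CommRing R]

theorem dvd_sum_ite_mul_sub_sum_mul {m q : R} (d : R) (y z : ι → R) (hq : m ∣ q) :
    m ∣ ∑ i, ∑ j, (if i = j then d else q) * y i * z j - ∑ i, d * y i * z i := by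
  have hsplit : ∀ i j, (if i = j then d else q) * y i * z j =
      (if i = j then d * y i * z i else 0) + (if i = j then 0 else q) * y i * z j := by
    intro i j
    split_ifs with h
    · subst h; ring
    · ring
  simp only [hsplit, Finset.sum_add_distrib, Finset.sum_ite_eq, Finset.mem_univ, if_true,
    add_sub_cancel_left]
  refine Finset.dvd_sum fun i _ => Finset.dvd_sum fun j _ => ?_
  split_ifs
  · simp
  · exact (hq.mul_right _).mul_right _

theorem forall_dvd_sum_mul_iff {m c : R} {y : ι → R} :
    (∀ z : ι → R, m ∣ ∑ i, c * y i * z i) ↔ ∀ i, m ∣ c * y i :=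
  ⟨fun h i => by simpa [Pi.single_apply] using h (Pi.single i 1),
    fun h _ => Finset.dvd_sum fun i _ => (h i).mul_right _⟩

end BilinearForm

/-- For the bilinear form `B` on `Y = ℤ^r` with `B(e_i,e_i) = 2p` and `B(e_i,e_j) = q`
for `i ≠ j`, if `n ∣ q` then `Y_{Q,n} = {y : ∀ z, n ∣ B(y,z)}` equals `n_α·Y` where
`n_α = n / gcd(2p, n)`. -/
theorem stmt10 (r : ℕ) (p q : ℤ) (n : ℕ) (hn : 0 < n) (hq : (n : ℤ) ∣ q)
    (B : (Fin r → ℤ) → (Fin r → ℤ) → ℤ)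
    (hB : ∀ y z, B y z = ∑ i, ∑ j, (if i = j then 2 * p else q) * y i * z j) :
    {y : Fin r → ℤ | ∀ z, (n : ℤ) ∣ B y z} =
      {y : Fin r → ℤ | ∀ i, ((n / Int.gcd (2 * p) n : ℕ) : ℤ) ∣ y i} := by
  ext y
  have hB_diag : ∀ z, (n : ℤ) ∣ B y z ↔ (n : ℤ) ∣ ∑ i, 2 * p * y i * z i := fun z =>
    hB y z ▸ dvd_iff_dvd_of_dvd_sub (dvd_sum_ite_mul_sub_sum_mul _ y z hq)
  simp only [Set.mem_ofPred_eq, hB_diag, forall_dvd_sum_mul_iff, Int.natCast_ediv,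
    Int.dvd_mul_iff_ediv_gcd_dvd (Int.natCast_ne_zero.mpr hn.ne')]
end

section
/- Let Y = Z^r and let B be the symmetric bilinear form on Y with B(e_i,e_i) = 2p and B(e_i,e_j) = 2p+1 for i ≠ j (the Kazhdan–Patterson case Q(α∨) = −1). Then the quotient group Y_{Q,n}/nY has order gcd(n, 2rp + r − 1), where Y_{Q,n} = {y ∈ Y : B(y,z) ∈ nZ for all z ∈ Y}. -/
/-!
Writing `c = 2p + 1`, the form is `B(y, z) = ∑ⱼ (c · ∑ᵢ yᵢ - yⱼ) zⱼ`, so `y ∈ Y_{Q,n}` exactly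
when every coordinate satisfies `yⱼ ≡ c · ∑ᵢ yᵢ (mod n)`. Modulo `n` such vectors are the
constant vectors `(t, …, t)` with `(rc - 1) t = 0`, and the kernel of multiplication by
`g = rc - 1 = 2rp + r - 1` on `ℤ/nℤ` has `gcd(g, n)` elements.
-/

theorem ZMod.card_intCast_mul_eq_zero (n : ℕ) [NeZero n] (g : ℤ) :
    Nat.card {s : ZMod n // (g : ZMod n) * s = 0} = Int.gcd g n := by
  set f := AddMonoidHom.mulLeft (g : ZMod n)
  have hrange : f.range = AddSubgroup.zmultiples (g : ZMod n) := by
    ext x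
    simp only [AddMonoidHom.mem_range, AddSubgroup.mem_zmultiples_iff, zsmul_eq_mul]
    constructor
    · rintro ⟨s, rfl⟩
      obtain ⟨k, rfl⟩ := ZMod.intCast_surjective s
      exact ⟨k, mul_comm _ _⟩
    · rintro ⟨k, rfl⟩
      exact ⟨k, mul_comm _ _⟩
  have horder : addOrderOf (g : ZMod n) = n / n.gcd g.natAbs := by
    obtain ⟨m, rfl | rfl⟩ := Int.eq_nat_or_neg g <;>
      simp [addOrderOf_neg, ZMod.addOrderOf_coe _ (NeZero.ne n)]
  have hmul : Nat.card f.ker * (n / n.gcd g.natAbs) = n := by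
    rw [← horder, ← Nat.card_zmultiples, ← hrange, ← AddSubgroup.index_ker,
      AddSubgroup.card_mul_index, Nat.card_zmod]
  have hdvd := Nat.gcd_dvd_left n g.natAbs
  have hker : Nat.card f.ker = n.gcd g.natAbs := by
    rw [← Nat.div_div_self hdvd (NeZero.ne n)]
    exact Nat.eq_div_of_mul_eq_left ((Nat.div_ne_zero_iff_of_dvd hdvd).2
      ⟨NeZero.ne n, (Nat.gcd_pos_of_pos_left _ (NeZero.pos n)).ne'⟩) hmul
  rw [Int.gcd, Int.natAbs_natCast, Nat.gcd_comm, ← hker]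
  rfl

theorem sum_sum_ite_mul_mul {ι R : Type*} [Fintype ι] [DecidableEq ι] [CommRing R]
    (a b : R) (y z : ι → R) :
    ∑ i, ∑ j, (if i = j then a else b) * y i * z j =
      ∑ j, (b * ∑ i, y i + (a - b) * y j) * z j := by
  rw [Finset.sum_comm]
  refine Finset.sum_congr rfl fun j _ => ?_
  have h (i : ι) : (if i = j then a else b) * y i * z j =
      (b * y i + if i = j then (a - b) * y i else 0) * z j := by
    split_ifs <;> ring
  simp only [h, ← Finset.sum_mul, Finset.sum_add_distrib, Finset.sum_ite_eq', Finset.mem_univ,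
    if_true, Finset.mul_sum]

theorem forall_dvd_sum_mul_iff_s11 {ι : Type*} [Fintype ι] [DecidableEq ι] (m : ℤ) (w : ι → ℤ) :
    (∀ z : ι → ℤ, m ∣ ∑ j, w j * z j) ↔ ∀ j, m ∣ w j := by
  refine ⟨fun h j => by simpa [Pi.single_apply] using h (Pi.single j 1), fun h z => ?_⟩
  exact Finset.dvd_sum fun j _ => (h j).mul_right _

theorem forall_dvd_kazhdanPatterson_iff {ι : Type*} [Fintype ι] [DecidableEq ι]
    (p : ℤ) (n : ℕ) (y : ι → ℤ) :
    (∀ z : ι → ℤ, (n : ℤ) ∣ ∑ i, ∑ j, (if i = j then 2 * p else 2 * p + 1) * y i * z j) ↔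
      ∀ j, (y j : ZMod n) = ((2 * p + 1 : ℤ) : ZMod n) * ∑ i, (y i : ZMod n) := by
  simp only [sum_sum_ite_mul_mul (2 * p) (2 * p + 1) y, forall_dvd_sum_mul_iff_s11]
  refine forall_congr' fun j => ?_
  rw [show 2 * p - (2 * p + 1) = -1 by ring, neg_one_mul, ← sub_eq_add_neg,
    ← ZMod.intCast_zmod_eq_zero_iff_dvd, Int.cast_sub, sub_eq_zero, eq_comm]
  push_cast
  rfl

theorem exists_intCast_lift_iff {ι : Type*} {n : ℕ} (P : (ι → ZMod n) → Prop)
    (x : ι → ZMod n) :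
    (∃ y : ι → ℤ, P (fun i => y i) ∧ ∀ i, (y i : ZMod n) = x i) ↔ P x := by
  refine ⟨fun ⟨y, hy, hyx⟩ => funext hyx ▸ hy, fun hx => ?_⟩
  exact ⟨fun i => (x i).cast, by simpa only [ZMod.intCast_zmod_cast],
    fun i => ZMod.intCast_zmod_cast _⟩

def eqConstMulSumEquiv {ι R : Type*} [Fintype ι] [CommRing R] (c : R) :
    {x : ι → R // ∀ j, x j = c * ∑ i, x i} ≃ {t : R // (Fintype.card ι * c - 1) * t = 0} where
  toFun x := ⟨c * ∑ i, x.1 i, by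
    have hsum : ∑ i, x.1 i = Fintype.card ι * c * ∑ i, x.1 i := by
      conv_lhs => rw [Finset.sum_congr rfl fun j _ => x.2 j]
      simp [mul_assoc]
    linear_combination -c * hsum⟩
  invFun t := ⟨fun _ => t, fun _ => by
    simp only [Finset.sum_const, Finset.card_univ, nsmul_eq_mul]
    linear_combination -t.2⟩
  left_inv x := Subtype.ext (funext fun j => (x.2 j).symm)
  right_inv t := Subtype.ext (by
    simp only [Finset.sum_const, Finset.card_univ, nsmul_eq_mul]
    linear_combination t.2)

theorem stmt11_general (r : ℕ) (p : ℤ) (n : ℕ) (hn : 0 < n)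
    (B : (Fin r → ℤ) → (Fin r → ℤ) → ℤ)
    (hB : ∀ y z, B y z = ∑ i, ∑ j, (if i = j then 2 * p else 2 * p + 1) * y i * z j) :
    Nat.card {x : Fin r → ZMod n //
        ∃ y : Fin r → ℤ, (∀ z, (n : ℤ) ∣ B y z) ∧ ∀ i, ((y i : ℤ) : ZMod n) = x i} =
      Int.gcd (2 * (r : ℤ) * p + (r : ℤ) - 1) (n : ℤ) := by
  have : NeZero n := ⟨hn.ne'⟩
  set c : ZMod n := ((2 * p + 1 : ℤ) : ZMod n)
  have hmem (x : Fin r → ZMod n) :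
      (∃ y : Fin r → ℤ, (∀ z, (n : ℤ) ∣ B y z) ∧ ∀ i, ((y i : ℤ) : ZMod n) = x i) ↔
        ∀ j, x j = c * ∑ i, x i := by
    simp only [hB, forall_dvd_kazhdanPatterson_iff]
    exact exists_intCast_lift_iff (fun x => ∀ j, x j = c * ∑ i, x i) x
  have hg : ((2 * (r : ℤ) * p + (r : ℤ) - 1 : ℤ) : ZMod n) = r * c - 1 := by
    push_cast [c]
    ring
  rw [Nat.card_congr ((Equiv.subtypeEquivRight hmem).trans (eqConstMulSumEquiv c)),
    ← ZMod.card_intCast_mul_eq_zero, hg, Fintype.card_fin]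

/-- For the Kazhdan–Patterson bilinear form `B` on `Y = ℤ^r` with `B(e_i,e_i) = 2p` and
`B(e_i,e_j) = 2p+1` for `i ≠ j`, the quotient `Y_{Q,n}/nY` (realized as the image of
`Y_{Q,n}` in `(ℤ/nℤ)^r`) has order `gcd(n, 2rp + r − 1)`. -/
theorem stmt11 (r : ℕ) (hr : 0 < r) (p : ℤ) (n : ℕ) (hn : 0 < n)
    (B : (Fin r → ℤ) → (Fin r → ℤ) → ℤ)
    (hB : ∀ y z, B y z = ∑ i, ∑ j, (if i = j then 2 * p else 2 * p + 1) * y i * z j) :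
    Nat.card {x : Fin r → ZMod n //
        ∃ y : Fin r → ℤ, (∀ z, (n : ℤ) ∣ B y z) ∧ ∀ i, ((y i : ℤ) : ZMod n) = x i} =
      Int.gcd (2 * (r : ℤ) * p + (r : ℤ) - 1) (n : ℤ) :=
  stmt11_general r p n hn B hB
end
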